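/- Ken Brown's lemma: let F : C → D be a functor between a model category C and a category D equipped with a class of weak equivalences satisfying two-out-of-three. If F sends acyclic cofibrations between cofibrant objects to weak equivalences, then F sends all weak equivalences between cofibrant objects to weak equivalences. -/

import Mathlib

open CategoryTheory CategoryTheory.Limits

universe v u

/-- A class of morphisms is closed under retracts if whenever `f` is a retract of
`g` (in the arrow category) and `g` lies in the class, so does `f`. -/
def RetractClosed {C : Type u} [Category.{v} C] (P : MorphismProperty C) : Prop :=
  ∀ {X Y X' Y' : C} (f : X ⟶ Y) (g : X' ⟶ Y')
    (iX : X ⟶ X') (rX : X' ⟶ X) (iY : Y ⟶ Y') (rY : Y' ⟶ Y),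
    iX ≫ rX = 𝟙 X → iY ≫ rY = 𝟙 Y → iX ≫ g = f ≫ iY → g ≫ rY = rX ≫ f →
    P g → P f

/-- A (Quillen) model structure on a category `C`: classes of weak equivalences,
cofibrations and fibrations satisfying the two-out-of-three, retract, lifting and
factorization axioms. -/
structure ModelStruct (C : Type u) [Category.{v} C] where
  W : MorphismProperty C
  Cof : MorphismProperty C
  Fib : MorphismProperty C
  w_id : ∀ X : C, W (𝟙 X)
  cof_id : ∀ X : C, Cof (𝟙 X)
  fib_id : ∀ X : C, Fib (𝟙 X)
  w_comp : ∀ {X Y Z : C} (f : X ⟶ Y) (g : Y ⟶ Z), W f → W g → W (f ≫ g)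
  w_cancel_left : ∀ {X Y Z : C} (f : X ⟶ Y) (g : Y ⟶ Z), W f → W (f ≫ g) → W g
  w_cancel_right : ∀ {X Y Z : C} (f : X ⟶ Y) (g : Y ⟶ Z), W g → W (f ≫ g) → W f
  w_retract : RetractClosed W
  cof_retract : RetractClosed Cof
  fib_retract : RetractClosed Fib
  lift_cof_trivFib : ∀ {A B X Y : C} (i : A ⟶ B) (p : X ⟶ Y),
    Cof i → Fib p → W p → HasLiftingProperty i p
  lift_trivCof_fib : ∀ {A B X Y : C} (i : A ⟶ B) (p : X ⟶ Y),
    Cof i → W i → Fib p → HasLiftingProperty i p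
  fact₁ : ∀ {X Y : C} (f : X ⟶ Y), ∃ (Z : C) (i : X ⟶ Z) (p : Z ⟶ Y),
    Cof i ∧ W p ∧ Fib p ∧ i ≫ p = f
  fact₂ : ∀ {X Y : C} (f : X ⟶ Y), ∃ (Z : C) (i : X ⟶ Z) (p : Z ⟶ Y),
    Cof i ∧ W i ∧ Fib p ∧ i ≫ p = f

namespace ModelStruct

variable {C : Type u} [Category.{v} C] (M : ModelStruct C)

/-- An object is fibrant if the map to the terminal object is a fibration. -/
def Fibrant [HasTerminal C] (X : C) : Prop := M.Fib (terminal.from X)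

/-- An object is cofibrant if the map from the initial object is a cofibration. -/
def Cofibrant [HasInitial C] (X : C) : Prop := M.Cof (initial.to X)

end ModelStruct

namespace ModelStruct

variable {C : Type u} [Category.{v} C] (M : ModelStruct C)

/-- The retract argument: factor `i` as a cofibration followed by an acyclic fibration `p`; a lift
against `p` exhibits `i` as a retract of that cofibration. -/
theorem cof_of_hasLiftingProperty {X Y : C} (i : X ⟶ Y)
    (h : ∀ {Z W : C} (p : Z ⟶ W), M.Fib p → M.W p → HasLiftingProperty i p) :
    M.Cof i := by
  obtain ⟨Z, j, p, hj, hp, hp', hjp⟩ := M.fact₁ i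
  have := h p hp' hp
  have sq : CommSq j i p (𝟙 Y) := ⟨by simp [hjp]⟩
  exact M.cof_retract i j (𝟙 X) (𝟙 X) sq.lift p (Category.id_comp _) sq.fac_right
    (by simp [sq.fac_left]) (by simp [hjp]) hj

theorem cof_comp {X Y Z : C} {i : X ⟶ Y} {j : Y ⟶ Z} (hi : M.Cof i) (hj : M.Cof j) :
    M.Cof (i ≫ j) :=
  M.cof_of_hasLiftingProperty _ fun p hp hp' =>
    have := M.lift_cof_trivFib i p hi hp hp'
    have := M.lift_cof_trivFib j p hj hp hp'
    inferInstance

variable [HasInitial C]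

theorem cofibrant_of_cof {A B : C} {i : A ⟶ B} (hA : M.Cofibrant A) (hi : M.Cof i) :
    M.Cofibrant B := by
  have := M.cof_comp hA hi
  rwa [initial.to_comp] at this

theorem cof_inl_of_isColimit {A B : C} {c : BinaryCofan A B} (hc : IsColimit c)
    (hB : M.Cofibrant B) : M.Cof c.inl := by
  refine M.cof_of_hasLiftingProperty _ fun {Z W} p hp hp' => ⟨fun {u v} sq => ?_⟩
  have := M.lift_cof_trivFib _ p hB hp hp'
  have sqB : CommSq (initial.to Z) (initial.to B) p (c.inr ≫ v) := ⟨initial.hom_ext _ _⟩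
  obtain ⟨l, hl, hr⟩ := BinaryCofan.IsColimit.desc' hc u sqB.lift
  refine ⟨⟨⟨l, hl, BinaryCofan.IsColimit.hom_ext hc ?_ ?_⟩⟩⟩
  · rw [reassoc_of% hl, sq.w]
  · rw [reassoc_of% hr]; exact sqB.fac_right

theorem cof_inr_of_isColimit {A B : C} {c : BinaryCofan A B} (hc : IsColimit c)
    (hA : M.Cofibrant A) : M.Cof c.inr :=
  M.cof_inl_of_isColimit (BinaryCofan.isColimitFlip hc) hA

/-- Factor `(f, 𝟙) : A ⨿ B ⟶ B` as a cofibration `q` followed by an acyclic fibration `p`,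
and restrict `q` to the two summands; these are cofibrations since `A` and `B` are cofibrant,
and weak equivalences by two-out-of-three. -/
theorem exists_trivCof_factorization_through_retraction [HasBinaryCoproducts C]
    {A B : C} {f : A ⟶ B} (hA : M.Cofibrant A) (hB : M.Cofibrant B) (hf : M.W f) :
    ∃ (Z : C) (j : A ⟶ Z) (s : B ⟶ Z) (p : Z ⟶ B), M.Cofibrant Z ∧
      M.Cof j ∧ M.W j ∧ M.Cof s ∧ M.W s ∧ j ≫ p = f ∧ s ≫ p = 𝟙 B := by
  obtain ⟨Z, q, p, hq, hp, -, hqp⟩ := M.fact₁ (coprod.desc f (𝟙 B))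
  have hjp : (coprod.inl ≫ q) ≫ p = f := by rw [Category.assoc, hqp, coprod.inl_desc]
  have hsp : (coprod.inr ≫ q) ≫ p = 𝟙 B := by rw [Category.assoc, hqp, coprod.inr_desc]
  have hinl : M.Cof (coprod.inl : A ⟶ A ⨿ B) := M.cof_inl_of_isColimit (colimit.isColimit _) hB
  have hinr : M.Cof (coprod.inr : B ⟶ A ⨿ B) := M.cof_inr_of_isColimit (colimit.isColimit _) hA
  have hj : M.Cof (coprod.inl ≫ q) := M.cof_comp hinl hq
  exact ⟨Z, coprod.inl ≫ q, coprod.inr ≫ q, p, M.cofibrant_of_cof hA hj,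
    hj, M.w_cancel_right _ p hp (hjp ▸ hf),
    M.cof_comp hinr hq, M.w_cancel_right _ p hp (hsp ▸ M.w_id B), hjp, hsp⟩

end ModelStruct

theorem ken_brown_lemma_general
    {C : Type u} [Category.{v} C] {D : Type u} [Category.{v} D]
    [HasInitial C] [HasColimits C]
    (M : ModelStruct C)
    (WD : MorphismProperty D)
    (hWD_comp : ∀ {X Y Z : D} (f : X ⟶ Y) (g : Y ⟶ Z), WD f → WD g → WD (f ≫ g))
    (hWD_cancel_left : ∀ {X Y Z : D} (f : X ⟶ Y) (g : Y ⟶ Z), WD f → WD (f ≫ g) → WD g)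
    (F : C ⥤ D)
    (hF : ∀ {A B : C} (i : A ⟶ B), M.Cofibrant A → M.Cofibrant B →
      M.Cof i → M.W i → WD (F.map i)) :
    ∀ {A B : C} (f : A ⟶ B), M.Cofibrant A → M.Cofibrant B → M.W f →
      WD (F.map f) := by
  intro A B f hA hB hf
  obtain ⟨Z, j, s, p, hZ, hj, hj', hs, hs', hjp, hsp⟩ :=
    M.exists_trivCof_factorization_through_retraction hA hB hf
  have hFs : WD (F.map s) := hF s hB hZ hs hs'
  have hFp : WD (F.map p) := by
    refine hWD_cancel_left _ _ hFs ?_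
    rw [← F.map_comp, hsp]
    exact hF _ hB hB (M.cof_id B) (M.w_id B)
  rw [← hjp, F.map_comp]
  exact hWD_comp _ _ (hF j hA hZ hj hj') hFp

/-- **Ken Brown's lemma.**
Let `C` be a model category (with its initial object, so that cofibrancy makes
sense) and `D` a category equipped with a class `WD` of weak equivalences
satisfying the two-out-of-three property.  If a functor `F : C ⥤ D` sends acyclic
cofibrations between cofibrant objects to weak equivalences, then `F` sends all
weak equivalences between cofibrant objects to weak equivalences. -/
theorem ken_brown_lemma
    {C : Type u} [Category.{v} C] {D : Type u} [Category.{v} D]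
    [HasInitial C] [HasColimits C]
    (M : ModelStruct C)
    (WD : MorphismProperty D)
    (hWD_comp : ∀ {X Y Z : D} (f : X ⟶ Y) (g : Y ⟶ Z), WD f → WD g → WD (f ≫ g))
    (hWD_cancel_left : ∀ {X Y Z : D} (f : X ⟶ Y) (g : Y ⟶ Z), WD f → WD (f ≫ g) → WD g)
    (hWD_cancel_right : ∀ {X Y Z : D} (f : X ⟶ Y) (g : Y ⟶ Z), WD g → WD (f ≫ g) → WD f)
    (F : C ⥤ D)
    (hF : ∀ {A B : C} (i : A ⟶ B), M.Cofibrant A → M.Cofibrant B →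
      M.Cof i → M.W i → WD (F.map i)) :
    ∀ {A B : C} (f : A ⟶ B), M.Cofibrant A → M.Cofibrant B → M.W f →
      WD (F.map f) :=
  ken_brown_lemma_general M WD hWD_comp hWD_cancel_left F hF
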